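/- Let Γ be a compact subset of the space of polynomial maps on the Riemann sphere of degree at least 2. Then there exists an open neighborhood U of ∞ in Ĉ such that for every sequence (γ₁, γ₂, …) ∈ Γ^ℕ, the compositions γ_n∘⋯∘γ₁ converge to ∞ locally uniformly on U as n → ∞. -/

import Mathlib

open OnePoint Polynomial
open scoped NNReal

/-- The Riemann sphere, modelled as the one-point compactification of `ℂ`. -/
abbrev RSphere : Type := OnePoint ℂ

/-- The Riemann sphere is a compact Hausdorff space; equip it with the unique uniform
structure compatible with its topology (on a compact Hausdorff space the uniformity is
unique, and it is the one induced by the spherical metric). -/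
noncomputable instance : UniformSpace RSphere := uniformSpaceOfCompactR1

/-- `f : Ĉ → Ĉ` is a (non-constant) rational map: there are coprime polynomials
`p`, `q` with `q ≠ 0`, not both constant, such that `f` is the extension of
`z ↦ p(z)/q(z)` to the Riemann sphere. -/
def IsRatMap (f : RSphere → RSphere) : Prop :=
  ∃ p q : Polynomial ℂ, IsCoprime p q ∧ q ≠ 0 ∧ 1 ≤ max p.natDegree q.natDegree ∧
    (∀ z : ℂ, q.eval z ≠ 0 → f ↑z = ((p.eval z / q.eval z : ℂ) : RSphere)) ∧
    (∀ z : ℂ, q.eval z = 0 → f ↑z = ∞) ∧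
    (q.degree < p.degree → f ∞ = ∞) ∧
    (p.degree < q.degree → f ∞ = ((0 : ℂ) : RSphere)) ∧
    (p.degree = q.degree → f ∞ = ((p.leadingCoeff / q.leadingCoeff : ℂ) : RSphere))

/-- `f : Ĉ → Ĉ` is a polynomial map of degree at least `2`. -/
def IsPolyMap (f : RSphere → RSphere) : Prop :=
  ∃ p : Polynomial ℂ, 2 ≤ p.natDegree ∧
    (∀ z : ℂ, f ↑z = ((p.eval z : ℂ) : RSphere)) ∧ f ∞ = ∞


/-- The composition `γ_{n+1} ∘ ⋯ ∘ γ_1` of the first `n+1` maps of a sequence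
(indexed from `0`). -/
def comps {Y : Type*} [TopologicalSpace Y] (γ : ℕ → C(Y, Y)) : ℕ → Y → Y
  | 0 => ⇑(γ 0)
  | n + 1 => ⇑(γ (n + 1)) ∘ comps γ n


lemma mem_nhds_infty_norm {s : Set RSphere} (hs : s ∈ nhds (∞ : RSphere)) :
    ∃ T : ℝ, ∀ w : ℂ, T < ‖w‖ → (w : RSphere) ∈ s := by
  obtain ⟨K, ⟨hKcl, hKcpt⟩, hsub⟩ := OnePoint.hasBasis_nhds_infty.mem_iff.mp hs
  obtain ⟨T, hT⟩ := hKcpt.isBounded.subset_closedBall 0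
  refine ⟨T, fun w hw => ?_⟩
  apply hsub
  refine Set.mem_union_left _ ⟨w, ?_, rfl⟩
  intro hwK
  have := hT hwK
  simp only [Metric.mem_closedBall, dist_zero_right] at this
  linarith

lemma isOpen_setOf_norm_lt (R : ℝ≥0) :
    IsOpen {x : RSphere | x = ∞ ∨ ∃ z : ℂ, x = ↑z ∧ R < ‖z‖₊} := by
  rw [OnePoint.isOpen_iff_of_mem (by exact Or.inl rfl)]
  have hpre : ((↑) : ℂ → RSphere) ⁻¹' {x : RSphere | x = ∞ ∨ ∃ z : ℂ, x = ↑z ∧ R < ‖z‖₊}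
      = {z : ℂ | R < ‖z‖₊} := by
    ext z
    simp only [Set.mem_preimage, Set.mem_setOf_eq]
    constructor
    · rintro (h | ⟨z', hz', hR⟩)
      · exact absurd h (OnePoint.coe_ne_infty z)
      · rwa [OnePoint.coe_eq_coe.mp hz']
    · intro h
      exact Or.inr ⟨z, rfl, h⟩
  rw [hpre]
  have hball : {z : ℂ | R < ‖z‖₊}ᶜ = Metric.closedBall 0 R := by
    ext z
    simp [Metric.mem_closedBall, dist_zero_right, not_lt, ← NNReal.coe_le_coe,
      coe_nnnorm]
  constructor
  · rw [hball]; exact Metric.isClosed_closedBall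
  · rw [hball]; exact isCompact_closedBall 0 R



lemma eval_eq_prod_roots (p : Polynomial ℂ) (z : ℂ) :
    p.eval z = p.leadingCoeff * ((p.roots.map fun r => z - r).prod) := by
  conv_lhs => rw [(IsAlgClosed.splits p).eq_prod_roots]
  simp [Polynomial.eval_multiset_prod, Multiset.map_map]

lemma nnnorm_eval_eq (p : Polynomial ℂ) (z : ℂ) :
    ‖p.eval z‖₊ = ‖p.leadingCoeff‖₊ * ((p.roots.map fun r => ‖z - r‖₊).prod) := by
  rw [eval_eq_prod_roots, nnnorm_mul]
  congr 1
  have := map_multiset_prod (nnnormHom : ℂ →*₀ ℝ≥0) (p.roots.map fun r => z - r)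
  simpa [Multiset.map_map] using this

lemma poly_escape (p : Polynomial ℂ) (R₀ : ℝ≥0) (hR₀ : 1 ≤ R₀) (hd : 2 ≤ p.natDegree)
    (h : ∀ z : ℂ, R₀ ≤ ‖z‖₊ → 1 ≤ ‖p.eval z‖₊) :
    ∀ z : ℂ, 32 * R₀ ^ 2 ≤ ‖z‖₊ → 2 * ‖z‖₊ ≤ ‖p.eval z‖₊ := by
  intro z hz
  have hR₀pos : (0:ℝ≥0) < R₀ := lt_of_lt_of_le one_pos hR₀
  have hcard : Multiset.card p.roots = p.natDegree :=
    Polynomial.splits_iff_card_roots.mp (IsAlgClosed.splits p)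
  set d := p.natDegree with hdd
  have hroots : ∀ r ∈ p.roots, ‖r‖₊ ≤ R₀ := by
    intro r hr
    by_contra hc
    push_neg at hc
    have hr0 : p.eval r = 0 := Polynomial.isRoot_of_mem_roots hr
    have := h r hc.le
    rw [hr0] at this
    simp at this
  have hz4 : 4 * R₀ ≤ ‖z‖₊ := by
    exact le_trans (mul_le_mul' (by norm_num) (le_self_pow₀ hR₀ two_ne_zero)) hz
  have hlow : ∀ r ∈ p.roots, ‖z‖₊ / 2 ≤ ‖z - r‖₊ := by
    intro r hr
    have h2 : (‖r‖ : ℝ) ≤ R₀ := by exact_mod_cast hroots r hr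
    have h4 : (4 * R₀ : ℝ) ≤ ‖z‖ := by exact_mod_cast hz4
    have h5 : |‖z‖ - ‖r‖| ≤ ‖z - r‖ := abs_norm_sub_norm_le z r
    have hR : (0:ℝ) < R₀ := hR₀pos
    rw [← NNReal.coe_le_coe]
    push_cast
    rw [abs_le] at h5
    linarith
  have hmain : ‖p.leadingCoeff‖₊ * (‖z‖₊ / 2) ^ d ≤ ‖p.eval z‖₊ := by
    rw [nnnorm_eval_eq]
    refine mul_le_mul_right ?_ _
    calc (‖z‖₊ / 2) ^ d = (‖z‖₊ / 2) ^ Multiset.card (p.roots.map fun r => ‖z - r‖₊) := by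
          rw [Multiset.card_map, hcard]
      _ ≤ _ := Multiset.pow_card_le_prod (by
          intro x hx
          obtain ⟨r, hr, rfl⟩ := Multiset.mem_map.mp hx
          exact hlow r hr)
  have hup : 1 ≤ ‖p.leadingCoeff‖₊ * (2 * R₀) ^ d := by
    have h1 : (1:ℝ≥0) ≤ ‖p.eval (R₀ : ℂ)‖₊ := by
      apply h
      simp [hR₀pos.le]
    refine le_trans h1 ?_
    rw [nnnorm_eval_eq]
    refine mul_le_mul_right ?_ _
    have hb : ∀ x ∈ p.roots.map fun r => ‖(R₀:ℂ) - r‖₊, x ≤ 2 * R₀ := by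
      intro x hx
      obtain ⟨r, hr, rfl⟩ := Multiset.mem_map.mp hx
      calc ‖(R₀:ℂ) - r‖₊ ≤ ‖(R₀:ℂ)‖₊ + ‖r‖₊ := nnnorm_sub_le _ _
        _ ≤ R₀ + R₀ := add_le_add (by simp) (hroots r hr)
        _ = 2 * R₀ := (two_mul R₀).symm
    calc (p.roots.map fun r => ‖(R₀:ℂ) - r‖₊).prod
        ≤ (2 * R₀) ^ Multiset.card (p.roots.map fun r => ‖(R₀:ℂ) - r‖₊) :=
          Multiset.prod_le_pow_card _ _ hb
      _ = (2 * R₀) ^ d := by rw [Multiset.card_map, hcard]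
  set t : ℝ≥0 := ‖z‖₊ / (4 * R₀) with ht
  have h4R₀ : (0 : ℝ≥0) < 4 * R₀ := by positivity
  have htmul : t * (2 * R₀) = ‖z‖₊ / 2 := by
    rw [ht]
    rw [div_mul_eq_mul_div, div_eq_div_iff (ne_of_gt h4R₀) two_ne_zero]
    ring
  have ht1 : 1 ≤ t := by
    rw [ht, le_div_iff₀ h4R₀, one_mul]
    exact hz4
  have htd : t ^ 2 ≤ ‖p.eval z‖₊ := by
    calc t ^ 2 ≤ t ^ d := pow_le_pow_right₀ ht1 hd
      _ = 1 * t ^ d := (one_mul _).symm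
      _ ≤ (‖p.leadingCoeff‖₊ * (2 * R₀) ^ d) * t ^ d := mul_le_mul_left hup _
      _ = ‖p.leadingCoeff‖₊ * ((2 * R₀) * t) ^ d := by rw [mul_assoc, ← mul_pow]
      _ = ‖p.leadingCoeff‖₊ * (‖z‖₊ / 2) ^ d := by rw [mul_comm (2*R₀) t, htmul]
      _ ≤ ‖p.eval z‖₊ := hmain
  refine le_trans ?_ htd
  rw [ht, div_pow, le_div_iff₀ (by positivity)]
  calc 2 * ‖z‖₊ * (4 * R₀) ^ 2 = (32 * R₀ ^ 2) * ‖z‖₊ := by ring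
    _ ≤ ‖z‖₊ * ‖z‖₊ := mul_le_mul_left hz _
    _ = ‖z‖₊ ^ 2 := (sq _).symm


-- step 1: uniform lower bound near infinity
lemma step1 (Γ : Set C(RSphere, RSphere)) (hcpt : IsCompact Γ)
    (hpoly : ∀ f ∈ Γ, IsPolyMap ⇑f) :
    ∃ R₀ : ℝ≥0, 1 ≤ R₀ ∧ ∀ f ∈ Γ, ∀ z : ℂ, R₀ ≤ ‖z‖₊ →
      ∃ w : ℂ, f ↑z = ↑w ∧ 1 ≤ ‖w‖₊ := by
  set W : Set RSphere := {x : RSphere | x = ∞ ∨ ∃ z : ℂ, x = ↑z ∧ (1:ℝ≥0) < ‖z‖₊} with hW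
  have hWopen : IsOpen W := isOpen_setOf_norm_lt 1
  have hsub : Γ ×ˢ ({∞} : Set RSphere) ⊆ (fun q : C(RSphere, RSphere) × RSphere => q.1 q.2) ⁻¹' W := by
    rintro ⟨f, x⟩ ⟨hf, hx⟩
    simp only [Set.mem_singleton_iff] at hx
    subst hx
    obtain ⟨p, _, _, hfix⟩ := hpoly f hf
    simp only [Set.mem_preimage]
    rw [hfix]
    exact Or.inl rfl
  obtain ⟨u, v, hu, hv, hΓu, hvmem, huv⟩ :=
    generalized_tube_lemma hcpt isCompact_singleton (hWopen.preimage continuous_eval) hsub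
  have hvnhds : v ∈ nhds (∞ : RSphere) := hv.mem_nhds (hvmem rfl)
  obtain ⟨T, hT⟩ := mem_nhds_infty_norm hvnhds
  refine ⟨(max T 0).toNNReal + 1, le_add_of_nonneg_left zero_le, ?_⟩
  intro f hf z hz
  have hzv : (z : RSphere) ∈ v := by
    apply hT
    have h1 : ((max T 0).toNNReal : ℝ) + 1 ≤ ‖z‖ := by
      have := hz
      rw [← NNReal.coe_le_coe] at this
      push_cast at this
      simpa using this
    have h2 : T ≤ (max T 0).toNNReal := by
      rw [Real.coe_toNNReal _ (le_max_right T 0)]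
      exact le_max_left T 0
    linarith
  have hfz : f ↑z ∈ W := by
    have := huv (Set.mk_mem_prod (hΓu hf) hzv)
    simpa using this
  obtain ⟨p, _, hev, _⟩ := hpoly f hf
  rw [hev z] at hfz ⊢
  rcases hfz with h | ⟨w, hw, h1w⟩
  · exact absurd h (OnePoint.coe_ne_infty _)
  · exact ⟨w, hw, h1w.le⟩

/-- For a compact set `Γ` of polynomial maps of degree `≥ 2` on the
Riemann sphere, there is an open neighborhood `U` of `∞` such that every infinite
composition `γ_n ∘ ⋯ ∘ γ_1` of maps from `Γ` converges to `∞` locally uniformly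
on `U`. -/
theorem stmt18 (Γ : Set C(RSphere, RSphere))
    (hcpt : IsCompact Γ)
    (hpoly : ∀ f ∈ Γ, IsPolyMap ⇑f) :
    ∃ U : Set RSphere, IsOpen U ∧ ∞ ∈ U ∧
      ∀ γ : ℕ → C(RSphere, RSphere), (∀ n, γ n ∈ Γ) →
        TendstoLocallyUniformlyOn (fun n => comps γ n) (fun _ => ∞) Filter.atTop U := by
  obtain ⟨R₀, hR₀, H1⟩ := step1 Γ hcpt hpoly
  set R : ℝ≥0 := 32 * R₀ ^ 2 with hRdef
  have hRpos : (1:ℝ≥0) ≤ R := by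
    calc (1:ℝ≥0) = 1 * 1 ^ 2 := by norm_num
      _ ≤ 32 * R₀ ^ 2 := by
          exact mul_le_mul' (by norm_num) (pow_le_pow_left' hR₀ 2)
  -- uniform escape
  have H2 : ∀ f ∈ Γ, ∀ z : ℂ, R ≤ ‖z‖₊ → ∃ w : ℂ, f ↑z = ↑w ∧ 2 * ‖z‖₊ ≤ ‖w‖₊ := by
    intro f hf z hz
    obtain ⟨p, hdeg, hev, _⟩ := hpoly f hf
    have hp1 : ∀ y : ℂ, R₀ ≤ ‖y‖₊ → 1 ≤ ‖p.eval y‖₊ := by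
      intro y hy
      obtain ⟨w, hw, h1w⟩ := H1 f hf y hy
      rw [hev y] at hw
      rw [OnePoint.coe_eq_coe.mp hw]
      exact h1w
    have := poly_escape p R₀ hR₀ hdeg hp1 z hz
    exact ⟨p.eval z, hev z, this⟩
  have Hfix : ∀ f ∈ Γ, f ∞ = ∞ := by
    intro f hf
    obtain ⟨p, _, _, hfix⟩ := hpoly f hf
    exact hfix
  refine ⟨{x : RSphere | x = ∞ ∨ ∃ z : ℂ, x = ↑z ∧ R < ‖z‖₊}, isOpen_setOf_norm_lt R,
    Or.inl rfl, ?_⟩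
  intro γ hγ
  -- invariance of ∞
  have Ha : ∀ n, comps γ n ∞ = ∞ := by
    intro n
    induction n with
    | zero => exact Hfix (γ 0) (hγ 0)
    | succ n ih =>
        show γ (n+1) (comps γ n ∞) = ∞
        rw [ih]
        exact Hfix (γ (n+1)) (hγ (n+1))
  -- growth
  have Hb : ∀ n, ∀ z : ℂ, R ≤ ‖z‖₊ →
      ∃ w : ℂ, comps γ n ↑z = ↑w ∧ 2 ^ (n+1) * R ≤ ‖w‖₊ := by
    intro n
    induction n with
    | zero =>
        intro z hz
        obtain ⟨w, hw, h2w⟩ := H2 (γ 0) (hγ 0) z hz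
        refine ⟨w, hw, ?_⟩
        calc (2:ℝ≥0) ^ 1 * R = 2 * R := by norm_num
          _ ≤ 2 * ‖z‖₊ := mul_le_mul_right hz 2
          _ ≤ ‖w‖₊ := h2w
    | succ n ih =>
        intro z hz
        obtain ⟨w, hw, h2w⟩ := ih z hz
        have hwR : R ≤ ‖w‖₊ := by
          refine le_trans ?_ h2w
          exact le_mul_of_one_le_left zero_le (one_le_pow_of_one_le' one_le_two _)
        obtain ⟨w', hw', h2w'⟩ := H2 (γ (n+1)) (hγ (n+1)) w hwR
        refine ⟨w', ?_, ?_⟩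
        · show γ (n+1) (comps γ n ↑z) = ↑w'
          rw [hw]
          exact hw'
        · calc (2:ℝ≥0) ^ (n+2) * R = 2 * (2 ^ (n+1) * R) := by ring
            _ ≤ 2 * ‖w‖₊ := mul_le_mul_right h2w 2
            _ ≤ ‖w'‖₊ := h2w'
  -- uniform convergence
  apply TendstoUniformlyOn.tendstoLocallyUniformlyOn
  intro u hu
  have hball : {y : RSphere | (∞, y) ∈ u} ∈ nhds (∞ : RSphere) :=
    UniformSpace.ball_mem_nhds ∞ hu
  obtain ⟨T, hT⟩ := mem_nhds_infty_norm hball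
  obtain ⟨N, hN⟩ := exists_nat_gt T
  refine Filter.eventually_atTop.mpr ⟨N, ?_⟩
  intro n hn x hx
  rcases hx with h | ⟨z, hz, hRz⟩
  · subst h
    show ((∞:RSphere), comps γ n (∞:RSphere)) ∈ u
    rw [Ha n]
    exact refl_mem_uniformity hu
  · subst hz
    obtain ⟨w, hw, h2w⟩ := Hb n z hRz.le
    show ((∞:RSphere), comps γ n ↑z) ∈ u
    rw [hw]
    apply hT
    have h1 : ((2:ℝ) ^ (n+1) * R) ≤ ‖w‖ := by
      rw [← NNReal.coe_le_coe] at h2w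
      push_cast at h2w
      exact h2w
    have h2 : (N:ℝ) ≤ 2 ^ (n+1) := by
      calc (N:ℝ) ≤ 2 ^ N := by
            exact_mod_cast (Nat.lt_two_pow_self (n := N)).le
        _ ≤ 2 ^ (n+1) := by
            apply pow_le_pow_right₀ one_le_two
            omega
    have hR1 : (1:ℝ) ≤ R := by exact_mod_cast hRpos
    have hpw : (0:ℝ) < 2 ^ (n+1) := by positivity
    calc T < (N:ℝ) := hN
      _ ≤ 2 ^ (n+1) := h2
      _ = 2 ^ (n+1) * 1 := (mul_one _).symm
      _ ≤ 2 ^ (n+1) * R := by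
          exact mul_le_mul_of_nonneg_left hR1 hpw.le
      _ ≤ ‖w‖ := h1
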